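/- Let β > 0 be fixed and let p = p(N) ∈ (0,1] be a sequence with p(N)·N → ∞. Then there exists a constant C > 0 such that for all sufficiently large N and all σ ∈ {-1,+1}^N, | log E[e^{-βH(σ)}] - ( -β²/8 + N²p(cosh(β/(2Np)) - 1) + (β/(2N))|σ|² ) | ≤ (C/(N²p²)) · (1 + |σ|²/N), where |σ| = σ_1 + ... + σ_N. -/

import Mathlib

open MeasureTheory ProbabilityTheory Filter
open scoped Classical

noncomputable section

/-- The spin value `±1` associated to a Boolean. -/
def spin (b : Bool) : ℝ := if b then 1 else -1

/-- The total magnetization `|σ| = σ₁ + ⋯ + σ_N` of a spin configuration. -/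
def mag {N : ℕ} (σ : Fin N → Bool) : ℝ := ∑ i, spin (σ i)

/-- The overlap `|στ| = ∑ σᵢτᵢ` of two spin configurations. -/
def magPair {N : ℕ} (σ τ : Fin N → Bool) : ℝ := ∑ i, spin (σ i) * spin (τ i)

/-- The Hamiltonian `H(σ) = -(1/(2Np)) ∑_{i,j} ε_{i,j} σᵢ σⱼ` of the Ising model on the
directed Erdős–Rényi graph with edge indicators `ε`. -/
def hamil (N : ℕ) (p : ℝ) (ε : Fin N × Fin N → Bool) (σ : Fin N → Bool) : ℝ :=
  -(1 / (2 * N * p)) * ∑ i : Fin N, ∑ j : Fin N,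
    (if ε (i, j) then (1 : ℝ) else 0) * spin (σ i) * spin (σ j)

/-- The joint law of the i.i.d. Bernoulli(p) edge indicators `(ε_{i,j})_{i,j=1}^N`. -/
def bern (N : ℕ) (p : ℝ) : Measure (Fin N × Fin N → Bool) :=
  Measure.pi fun _ => (PMF.bernoulli (min 1 (Real.toNNReal p)) (min_le_left _ _)).toMeasure

/-- The generalized partition function `Z_N(β, g) = ∑_σ e^{-βH(σ)} g(|σ|/√N)`. -/
def ZNg (N : ℕ) (p β : ℝ) (g : ℝ → ℝ) (ε : Fin N × Fin N → Bool) : ℝ :=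
  ∑ σ : Fin N → Bool, Real.exp (-β * hamil N p ε σ) * g (mag σ / Real.sqrt N)

/-- The expectation `𝔼 Z_N(β, g)` over the randomness of the graph. -/
def EZNg (N : ℕ) (p β : ℝ) (g : ℝ → ℝ) : ℝ :=
  ∫ ε, ZNg N p β g ε ∂(bern N p)

/-- The Gaussian expectation `𝔼_ξ [g(ξ) e^{β ξ²/2}]` for a standard normal `ξ`. -/
def gaussExp (β : ℝ) (g : ℝ → ℝ) : ℝ :=
  ∫ x, g x * Real.exp (β * x ^ 2 / 2) ∂(gaussianReal 0 1)

/-!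
Averaging over the independent edges, `𝔼 e^{-βH(σ)} = ∏_{i,j} (1 - p + p e^{t σᵢσⱼ})` with
`t = β/(2Np)`, so its logarithm is `∑_{i,j} Λ(t σᵢσⱼ)` for the cumulant generating function
`Λ(t) = log (1 - p + p eᵗ)` of a Bernoulli(p) variable. As `σᵢσⱼ = ±1`, this is
`N² Λ₊(t) + |σ|² Λ₋(t)` with `Λ₊`, `Λ₋` the even and odd parts of `Λ`.

Writing `1 - p + p e^{±t} = a ± p sinh t` with `a = 1 + p (cosh t - 1)` gives
`2Λ₊(t) = log (1 + 2p(1-p)(cosh t - 1))` and `2Λ₋(t) = log (1 + z) - log (1 - z)` with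
`z = p sinh t / a`. First- and third-order expansions of the logarithm then give
`Λ₊(t) = p (cosh t - 1) - p²t²/2 + O(p²t⁴)` and `Λ₋(t) = pt + O(pt³)`. Since `N²p²t² = β²/4`,
`pt = β/(2N)`, and `t ≤ 1/4` once `pN ≥ 2β`, the errors are `O(1/(N²p²))` and
`O(|σ|²/(N³p²))`.
-/

open Finset

namespace Real

theorem abs_cosh_sub_one_sub_sq_div_two_le {t : ℝ} (ht : |t| ≤ 1) :
    |cosh t - 1 - t ^ 2 / 2| ≤ t ^ 4 / 16 := by
  have hpos := exp_bound ht (n := 4) (by norm_num)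
  have hneg := exp_bound (x := -t) (by rwa [abs_neg]) (n := 4) (by norm_num)
  simp only [sum_range_succ, sum_range_zero, Nat.factorial, abs_neg] at hpos hneg
  rw [cosh_eq]
  have h4 : |t| ^ 4 = t ^ 4 := by rw [← abs_pow, abs_of_nonneg (by positivity)]
  rw [h4] at hpos hneg
  rw [abs_le] at *
  norm_num at hpos hneg
  constructor <;> nlinarith [hpos, hneg]

theorem abs_sinh_sub_self_le {t : ℝ} (ht : |t| ≤ 1) : |sinh t - t| ≤ |t| ^ 3 / 4 := by
  have hpos := exp_bound ht (n := 3) (by norm_num)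
  have hneg := exp_bound (x := -t) (by rwa [abs_neg]) (n := 3) (by norm_num)
  simp only [sum_range_succ, sum_range_zero, Nat.factorial, abs_neg] at hpos hneg
  rw [sinh_eq, abs_le] at *
  norm_num at hpos hneg
  have := pow_nonneg (abs_nonneg t) 3
  constructor <;> nlinarith [hpos, hneg]

theorem abs_log_one_add_sub_self_le {x : ℝ} (hx : |x| ≤ 1 / 2) :
    |log (1 + x) - x| ≤ 2 * x ^ 2 := by
  have h := abs_log_sub_add_sum_range_le (x := -x) (by rw [abs_neg]; linarith) 1
  norm_num [abs_neg] at h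
  calc |log (1 + x) - x| = |-x + log (1 + x)| := by ring_nf
    _ ≤ x ^ 2 / (1 - |x|) := h
    _ ≤ 2 * x ^ 2 := by
        rw [div_le_iff₀ (by linarith)]
        nlinarith [sq_nonneg x]

theorem abs_log_one_add_sub_log_one_sub_sub_le {x : ℝ} (hx : |x| ≤ 1 / 2) :
    |log (1 + x) - log (1 - x) - 2 * x| ≤ 4 * |x| ^ 3 := by
  have hplus := abs_log_sub_add_sum_range_le (x := -x) (by rw [abs_neg]; linarith) 2
  have hminus := abs_log_sub_add_sum_range_le (x := x) (by linarith) 2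
  norm_num [sum_range_succ, abs_neg] at hplus hminus
  have hbound : |x| ^ 3 / (1 - |x|) ≤ 2 * |x| ^ 3 := by
    rw [div_le_iff₀ (by linarith)]
    nlinarith [pow_nonneg (abs_nonneg x) 3]
  calc |log (1 + x) - log (1 - x) - 2 * x|
      = |(-x + x ^ 2 / 2 + log (1 + x)) - (x + x ^ 2 / 2 + log (1 - x))| := by ring_nf
    _ ≤ _ := abs_sub _ _
    _ ≤ 4 * |x| ^ 3 := by linarith

theorem cosh_sub_one_le_sq {t : ℝ} (ht : |t| ≤ 1) : cosh t - 1 ≤ t ^ 2 := by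
  have ht2 : t ^ 2 ≤ 1 := (sq_le_one_iff_abs_le_one t).2 ht
  nlinarith [(abs_le.1 (abs_cosh_sub_one_sub_sq_div_two_le ht)).2]

theorem abs_sinh_le_two_mul_abs {t : ℝ} (ht : |t| ≤ 1) : |sinh t| ≤ 2 * |t| := by
  have h3 : |t| ^ 3 ≤ |t| := pow_le_of_le_one (abs_nonneg t) ht (by norm_num)
  linarith [abs_nonneg t, abs_sub_abs_le_abs_sub (sinh t) t, abs_sinh_sub_self_le ht]

end Real

open Real

def bernoulliCgf (p t : ℝ) : ℝ := log (1 - p + p * exp t)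

section BernoulliCgf

variable {p : ℝ}

theorem one_sub_add_mul_exp_pos (hp0 : 0 ≤ p) (hp1 : p ≤ 1) (t : ℝ) :
    0 < 1 - p + p * exp t := by
  rcases hp1.lt_or_eq with hp1 | rfl
  · nlinarith [exp_pos t]
  · simpa using exp_pos t

theorem bernoulliCgf_add_bernoulliCgf_neg (hp0 : 0 ≤ p) (hp1 : p ≤ 1) (t : ℝ) :
    bernoulliCgf p t + bernoulliCgf p (-t) = log (1 + 2 * p * (1 - p) * (cosh t - 1)) := by
  rw [bernoulliCgf, bernoulliCgf, ← log_mul (one_sub_add_mul_exp_pos hp0 hp1 t).ne'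
    (one_sub_add_mul_exp_pos hp0 hp1 (-t)).ne', cosh_eq]
  congr 1
  have : exp t * exp (-t) = 1 := by rw [← exp_add, add_neg_cancel, exp_zero]
  linear_combination p ^ 2 * this

theorem bernoulliCgf_sub_bernoulliCgf_neg (hp0 : 0 ≤ p) (hp1 : p ≤ 1) (t : ℝ) :
    bernoulliCgf p t - bernoulliCgf p (-t) =
      log (1 + p * sinh t / (1 + p * (cosh t - 1)))
        - log (1 - p * sinh t / (1 + p * (cosh t - 1))) := by
  have ha : 0 < 1 + p * (cosh t - 1) := by nlinarith [one_le_cosh t]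
  set a := 1 + p * (cosh t - 1)
  have hplus : 1 - p + p * exp t = a * (1 + p * sinh t / a) := by
    rw [← cosh_add_sinh]; field_simp; ring
  have hminus : 1 - p + p * exp (-t) = a * (1 - p * sinh t / a) := by
    rw [← cosh_sub_sinh]; field_simp; ring
  have hpos := one_sub_add_mul_exp_pos hp0 hp1 t
  have hneg := one_sub_add_mul_exp_pos hp0 hp1 (-t)
  rw [hplus] at hpos
  rw [hminus] at hneg
  rw [bernoulliCgf, bernoulliCgf, hplus, hminus,
    log_mul ha.ne' (pos_of_mul_pos_right hpos ha.le).ne',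
    log_mul ha.ne' (pos_of_mul_pos_right hneg ha.le).ne']
  ring

theorem abs_bernoulliCgf_even_sub_le (hp0 : 0 ≤ p) (hp1 : p ≤ 1) {t : ℝ} (ht : |t| ≤ 1) :
    |(bernoulliCgf p t + bernoulliCgf p (-t)) / 2 - (p * (cosh t - 1) - p ^ 2 * t ^ 2 / 2)|
      ≤ 5 * p ^ 2 * t ^ 4 := by
  have hc := abs_cosh_sub_one_sub_sq_div_two_le ht
  have hc0 : 0 ≤ cosh t - 1 := sub_nonneg.2 (one_le_cosh t)
  have hct := cosh_sub_one_le_sq ht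
  have ht2 : t ^ 2 ≤ 1 := (sq_le_one_iff_abs_le_one t).2 ht
  set c := cosh t - 1
  set y := 2 * p * (1 - p) * c with hy
  have hy0 : 0 ≤ y := by have := sub_nonneg.2 hp1; positivity
  have hy1 : y ≤ 1 / 2 := by
    nlinarith [sq_nonneg (p - 1 / 2), mul_nonneg hp0 (sub_nonneg.2 hp1)]
  have hlog := abs_log_one_add_sub_self_le (x := y) (by rwa [abs_of_nonneg hy0])
  have hy2 : y ^ 2 ≤ 4 * p ^ 2 * t ^ 4 := by
    have : y ≤ 2 * p * t ^ 2 := by nlinarith [mul_nonneg hp0 hc0]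
    nlinarith
  rw [bernoulliCgf_add_bernoulliCgf_neg hp0 hp1]
  calc |log (1 + y) / 2 - (p * c - p ^ 2 * t ^ 2 / 2)|
      = |(log (1 + y) - y) / 2 - p ^ 2 * (c - t ^ 2 / 2)| := by rw [hy]; ring_nf
    _ ≤ |log (1 + y) - y| / 2 + p ^ 2 * |c - t ^ 2 / 2| := by
        refine (abs_sub _ _).trans ?_
        rw [abs_div, abs_two, abs_mul, abs_of_nonneg (sq_nonneg p)]
    _ ≤ y ^ 2 + p ^ 2 * (t ^ 4 / 16) := by gcongr; linarith
    _ ≤ 5 * p ^ 2 * t ^ 4 := by nlinarith [sq_nonneg p, pow_nonneg (sq_nonneg t) 2]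

theorem abs_mul_sinh_div_le (hp0 : 0 ≤ p) {t : ℝ} (ht : |t| ≤ 1) :
    |p * sinh t / (1 + p * (cosh t - 1))| ≤ 2 * p * |t| := by
  have ha : 1 ≤ 1 + p * (cosh t - 1) := by nlinarith [one_le_cosh t]
  rw [abs_div, abs_mul, abs_of_nonneg hp0, abs_of_pos (show 0 < 1 + p * (cosh t - 1) by linarith)]
  calc p * |sinh t| / (1 + p * (cosh t - 1)) ≤ p * |sinh t| := div_le_self (by positivity) ha
    _ ≤ p * (2 * |t|) := by gcongr; exact abs_sinh_le_two_mul_abs ht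
    _ = 2 * p * |t| := by ring

theorem abs_mul_sinh_div_sub_mul_le (hp0 : 0 ≤ p) (hp1 : p ≤ 1) {t : ℝ} (ht : |t| ≤ 1) :
    |p * sinh t / (1 + p * (cosh t - 1)) - p * t| ≤ 5 / 4 * p * |t| ^ 3 := by
  have hc0 : 0 ≤ cosh t - 1 := sub_nonneg.2 (one_le_cosh t)
  have hct := cosh_sub_one_le_sq ht
  have ha : 1 ≤ 1 + p * (cosh t - 1) := by nlinarith
  have hpt : |p * t * (cosh t - 1)| ≤ |t| ^ 3 := by
    rw [abs_mul, abs_mul, abs_of_nonneg hp0, abs_of_nonneg hc0, pow_succ', sq_abs t]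
    have := mul_le_mul_of_nonneg_left hct (abs_nonneg t)
    nlinarith [mul_nonneg (abs_nonneg t) hc0]
  have hz : p * sinh t / (1 + p * (cosh t - 1)) - p * t
      = p * ((sinh t - t) - p * t * (cosh t - 1)) / (1 + p * (cosh t - 1)) := by
    field_simp; ring
  rw [hz, abs_div, abs_mul, abs_of_nonneg hp0,
    abs_of_pos (show 0 < 1 + p * (cosh t - 1) by linarith)]
  calc p * |sinh t - t - p * t * (cosh t - 1)| / (1 + p * (cosh t - 1))
      ≤ p * |sinh t - t - p * t * (cosh t - 1)| := div_le_self (by positivity) ha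
    _ ≤ p * (|t| ^ 3 / 4 + |t| ^ 3) := by
        gcongr; exact (abs_sub _ _).trans (add_le_add (abs_sinh_sub_self_le ht) hpt)
    _ = 5 / 4 * p * |t| ^ 3 := by ring

theorem abs_bernoulliCgf_odd_sub_le (hp0 : 0 ≤ p) (hp1 : p ≤ 1) {t : ℝ} (ht : |t| ≤ 1 / 4) :
    |(bernoulliCgf p t - bernoulliCgf p (-t)) / 2 - p * t| ≤ 18 * p * |t| ^ 3 := by
  have ht1 : |t| ≤ 1 := by linarith
  set z := p * sinh t / (1 + p * (cosh t - 1))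
  have hz : |z| ≤ 2 * p * |t| := abs_mul_sinh_div_le hp0 ht1
  have hzt : |z - p * t| ≤ 5 / 4 * p * |t| ^ 3 := abs_mul_sinh_div_sub_mul_le hp0 hp1 ht1
  have hz3 : |z| ^ 3 ≤ 8 * p * |t| ^ 3 :=
    calc |z| ^ 3 ≤ (2 * p * |t|) ^ 3 := by gcongr
      _ = 8 * p ^ 3 * |t| ^ 3 := by ring
      _ ≤ 8 * p * |t| ^ 3 := by gcongr; exact pow_le_of_le_one hp0 hp1 (by norm_num)
  have hlog := abs_log_one_add_sub_log_one_sub_sub_le (x := z) (by nlinarith [abs_nonneg t])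
  rw [bernoulliCgf_sub_bernoulliCgf_neg hp0 hp1]
  calc |(log (1 + z) - log (1 - z)) / 2 - p * t|
      = |(log (1 + z) - log (1 - z) - 2 * z) / 2 + (z - p * t)| := by ring_nf
    _ ≤ |log (1 + z) - log (1 - z) - 2 * z| / 2 + |z - p * t| := by
        refine (abs_add_le _ _).trans ?_
        rw [abs_div, abs_two]
    _ ≤ 18 * p * |t| ^ 3 := by
        have := pow_nonneg (abs_nonneg t) 3
        linarith [mul_nonneg hp0 this]

end BernoulliCgf

theorem integral_bernoulli_exp_mul_indicator {p : ℝ} (hp0 : 0 ≤ p) (hp1 : p ≤ 1) (c : ℝ) :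
    ∫ b, exp (c * (if b then 1 else 0))
      ∂(PMF.bernoulli (min 1 (Real.toNNReal p)) (min_le_left _ _)).toMeasure
      = 1 - p + p * exp c := by
  have hmin : min 1 p.toNNReal = p.toNNReal := min_eq_right (Real.toNNReal_le_one.mpr hp1)
  rw [PMF.integral_eq_sum, Fintype.sum_bool, PMF.bernoulli_apply, PMF.bernoulli_apply,
    Bool.cond_true, Bool.cond_false, hmin, ENNReal.coe_toReal, ENNReal.coe_toReal,
    NNReal.coe_sub (Real.toNNReal_le_one.mpr hp1), Real.coe_toNNReal _ hp0]
  simp only [↓reduceIte, mul_one, smul_eq_mul, NNReal.coe_one, Bool.false_eq_true, mul_zero,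
    exp_zero]
  ring

theorem neg_mul_hamil_eq_sum {N : ℕ} (p β : ℝ) (ε : Fin N × Fin N → Bool) (σ : Fin N → Bool) :
    -β * hamil N p ε σ = ∑ q : Fin N × Fin N,
      β / (2 * N * p) * (spin (σ q.1) * spin (σ q.2)) * (if ε q then 1 else 0) := by
  rw [hamil, Fintype.sum_prod_type, ← mul_assoc, neg_mul_neg, Finset.mul_sum]
  refine Finset.sum_congr rfl fun i _ => ?_
  rw [Finset.mul_sum]
  refine Finset.sum_congr rfl fun j _ => ?_
  ring

theorem integral_exp_neg_mul_hamil (N : ℕ) {p : ℝ} (hp0 : 0 ≤ p) (hp1 : p ≤ 1) (β : ℝ)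
    (σ : Fin N → Bool) :
    ∫ ε, exp (-β * hamil N p ε σ) ∂(bern N p) = ∏ q : Fin N × Fin N,
      (1 - p + p * exp (β / (2 * N * p) * (spin (σ q.1) * spin (σ q.2)))) := by
  simp_rw [neg_mul_hamil_eq_sum, exp_sum]
  exact (integral_fintype_prod_eq_prod (E := fun _ => Bool) fun (q : Fin N × Fin N) b =>
    exp (β / (2 * N * p) * (spin (σ q.1) * spin (σ q.2)) * (if b then 1 else 0))).trans
    (Finset.prod_congr rfl fun q _ => integral_bernoulli_exp_mul_indicator hp0 hp1 _)

theorem bernoulliCgf_mul_spin_mul_spin (p t : ℝ) (a b : Bool) :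
    bernoulliCgf p (t * (spin a * spin b)) = (bernoulliCgf p t + bernoulliCgf p (-t)) / 2
      + spin a * spin b * ((bernoulliCgf p t - bernoulliCgf p (-t)) / 2) := by
  cases a <;> cases b <;> simp only [spin] <;> norm_num <;> ring

theorem sum_spin_mul_spin {N : ℕ} (σ : Fin N → Bool) :
    ∑ q : Fin N × Fin N, spin (σ q.1) * spin (σ q.2) = mag σ ^ 2 := by
  rw [Fintype.sum_prod_type, mag, sq, Finset.sum_mul_sum]

theorem log_integral_exp_neg_mul_hamil (N : ℕ) {p : ℝ} (hp0 : 0 ≤ p) (hp1 : p ≤ 1) (β : ℝ)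
    (σ : Fin N → Bool) :
    log (∫ ε, exp (-β * hamil N p ε σ) ∂(bern N p)) =
      N ^ 2 * ((bernoulliCgf p (β / (2 * N * p)) + bernoulliCgf p (-(β / (2 * N * p)))) / 2)
      + mag σ ^ 2 *
        ((bernoulliCgf p (β / (2 * N * p)) - bernoulliCgf p (-(β / (2 * N * p)))) / 2) := by
  rw [integral_exp_neg_mul_hamil N hp0 hp1,
    log_prod fun q _ => (one_sub_add_mul_exp_pos hp0 hp1 _).ne']
  simp_rw [← bernoulliCgf.eq_1, bernoulliCgf_mul_spin_mul_spin]
  rw [Finset.sum_add_distrib, ← Finset.sum_mul, sum_spin_mul_spin, Finset.sum_const,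
    Finset.card_univ, Fintype.card_prod, Fintype.card_fin, nsmul_eq_mul]
  push_cast
  ring

theorem abs_log_integral_exp_neg_mul_hamil_sub_le {N : ℕ} {p β : ℝ} (hp0 : 0 < p) (hp1 : p ≤ 1)
    (hβ : 0 < β) (hNp : 2 * β ≤ p * N) (σ : Fin N → Bool) :
    |log (∫ ε, exp (-β * hamil N p ε σ) ∂(bern N p))
        - (-β ^ 2 / 8 + (N : ℝ) ^ 2 * p * (cosh (β / (2 * N * p)) - 1) + β / (2 * N) * mag σ ^ 2)|
      ≤ (5 / 16 * β ^ 4 + 9 / 4 * β ^ 3) / ((N : ℝ) ^ 2 * p ^ 2) * (1 + mag σ ^ 2 / N) := by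
  have hN : (0 : ℝ) < N := pos_of_mul_pos_right (hβ.trans_le (by linarith)) hp0.le
  set t := β / (2 * N * p) with ht_def
  have ht0 : 0 < t := by positivity
  have ht : |t| ≤ 1 / 4 := by
    rw [abs_of_pos ht0, ht_def, div_le_iff₀ (by positivity)]
    linarith
  have hA := abs_bernoulliCgf_even_sub_le hp0.le hp1 (ht.trans (by norm_num))
  have hB := abs_bernoulliCgf_odd_sub_le hp0.le hp1 ht
  rw [abs_of_pos ht0] at hB
  set A := (bernoulliCgf p t + bernoulliCgf p (-t)) / 2
  set B := (bernoulliCgf p t - bernoulliCgf p (-t)) / 2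
  set m := mag σ
  have hβt : β = 2 * N * p * t := by rw [ht_def]; field_simp
  rw [log_integral_exp_neg_mul_hamil N hp0.le hp1]
  calc |N ^ 2 * A + m ^ 2 * B - (-β ^ 2 / 8 + N ^ 2 * p * (cosh t - 1) + β / (2 * N) * m ^ 2)|
      = |N ^ 2 * (A - (p * (cosh t - 1) - p ^ 2 * t ^ 2 / 2)) + m ^ 2 * (B - p * t)| := by
        rw [hβt]; field_simp; ring_nf
    _ ≤ N ^ 2 * (5 * p ^ 2 * t ^ 4) + m ^ 2 * (18 * p * t ^ 3) := by
        refine (abs_add_le _ _).trans ?_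
        rw [abs_mul, abs_mul, abs_of_nonneg (by positivity : (0 : ℝ) ≤ N ^ 2),
          abs_of_nonneg (sq_nonneg m)]
        gcongr
    _ = 5 / 16 * β ^ 4 / (N ^ 2 * p ^ 2) + 9 / 4 * β ^ 3 / (N ^ 2 * p ^ 2) * (m ^ 2 / N) := by
        rw [hβt]; field_simp; ring
    _ ≤ (5 / 16 * β ^ 4 + 9 / 4 * β ^ 3) / (N ^ 2 * p ^ 2) * (1 + m ^ 2 / N) := by
        rw [add_div, mul_one_add, add_mul]
        gcongr
        · exact le_add_of_nonneg_right (by positivity)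
        · exact le_add_of_nonneg_left (by positivity)

/-- **Lemma 3.** For fixed `β > 0` and `p = p(N)` with `pN → ∞`, there is `C > 0` such that
for all large `N` and all `σ ∈ {-1,+1}^N`,
`|log 𝔼 e^{-βH(σ)} - (-β²/8 + N²p(cosh(β/(2Np)) - 1) + β|σ|²/(2N))| ≤ C/(N²p²) · (1 + |σ|²/N)`. -/
theorem log_expectation_exp_H (β : ℝ) (hβ : 0 < β)
    (p : ℕ → ℝ) (hp : ∀ N, p N ∈ Set.Ioc (0 : ℝ) 1)
    (hpN : Tendsto (fun N : ℕ => p N * (N : ℝ)) atTop atTop) :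
    ∃ C > (0 : ℝ), ∀ᶠ N : ℕ in atTop, ∀ σ : Fin N → Bool,
      |Real.log (∫ ω, Real.exp (-β * hamil N (p N) ω σ) ∂(bern N (p N)))
          - (-β ^ 2 / 8 + (N : ℝ) ^ 2 * p N * (Real.cosh (β / (2 * N * p N)) - 1)
              + β / (2 * N) * (mag σ) ^ 2)|
        ≤ C / ((N : ℝ) ^ 2 * (p N) ^ 2) * (1 + (mag σ) ^ 2 / N) := by
  refine ⟨5 / 16 * β ^ 4 + 9 / 4 * β ^ 3, by positivity, ?_⟩
  filter_upwards [hpN.eventually_ge_atTop (2 * β)] with N hN σ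
  exact abs_log_integral_exp_neg_mul_hamil_sub_le (hp N).1 (hp N).2 hβ hN σ
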